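/- arXiv:2402.19189 — 6 statements merged into one kernel-verified Lean document; each statement's English description precedes it below -/
import Mathlib

section
/- Under the independent cascade (live-edge) model, for any seed set S ⊆ V, any set A of already-added edges disjoint from E, and any additional candidate edge e = ⟨u, v⟩ ∉ E ∪ A with u ∈ S and propagation probability p_{u,v} ∈ [0,1], the augmented influence spread satisfies σ(A ∪ {e}, S) = p_{u,v} · σ(A, S ∪ {v}) + (1 − p_{u,v}) · σ(A, S). -/
open scoped Classical

noncomputable section

/-- The set of nodes reachable from some node of `S` via edges of `g`
(every node reaches itself). -/
def Reach {V : Type*} (S : Finset V) (g : Finset (V × V)) : Set V :=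
  {x | ∃ s ∈ S, Relation.ReflTransGen (fun a b => (a, b) ∈ g) s x}

/-- Probability of the live-edge graph `g ⊆ F`:
`∏_{e ∈ g} p_e · ∏_{e ∈ F ∖ g} (1 - p_e)`. -/
def liveProb {V : Type*} [DecidableEq V] (F : Finset (V × V)) (p : V × V → ℝ)
    (g : Finset (V × V)) : ℝ :=
  (∏ e ∈ g, p e) * ∏ e ∈ F \ g, (1 - p e)

/-- The expected spread of the seed set `S` over live-edge graphs of edge set `F`. -/
def expSpread {V : Type*} [DecidableEq V] (F : Finset (V × V)) (p : V × V → ℝ)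
    (S : Finset V) : ℝ :=
  ∑ g ∈ F.powerset, liveProb F p g * ((Reach S g).ncard : ℝ)

/-! Condition on the state of the new edge `(u, v)`. If it is dead, the live-edge graphs and
their weights are those of `E ∪ A`, scaled by `1 - p (u, v)`. If it is live, it can only add
`v` to the reachable set, and since `u` is a seed this is exactly the effect of seeding `v`. -/

section

variable {V : Type*} [DecidableEq V]

lemma reach_insert_edge_of_mem {S : Finset V} {u : V} (hu : u ∈ S) (g : Finset (V × V))
    (v : V) : Reach S (insert (u, v) g) = Reach (insert v S) g := by
  ext x
  constructor
  · rintro ⟨s, hs, hpath⟩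
    induction hpath with
    | refl => exact ⟨s, Finset.mem_insert_of_mem hs, .refl⟩
    | tail _ hbc ih =>
      rcases Finset.mem_insert.mp hbc with h | h
      · cases h
        exact ⟨v, Finset.mem_insert_self _ _, .refl⟩
      · obtain ⟨t, ht, hpath⟩ := ih
        exact ⟨t, ht, hpath.tail h⟩
  · rintro ⟨t, ht, hpath⟩
    have hpath' : Relation.ReflTransGen (fun a b => (a, b) ∈ insert (u, v) g) t x :=
      Relation.ReflTransGen.mono (fun _ _ => Finset.mem_insert_of_mem) _ _ hpath
    rcases Finset.mem_insert.mp ht with rfl | ht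
    · exact ⟨u, hu, (Relation.ReflTransGen.single (Finset.mem_insert_self _ _)).trans hpath'⟩
    · exact ⟨t, ht, hpath'⟩

variable {F g : Finset (V × V)} {e : V × V} (p : V × V → ℝ)

lemma liveProb_insert_of_notMem (heF : e ∉ F) (heg : e ∉ g) :
    liveProb (insert e F) p g = (1 - p e) * liveProb F p g := by
  have heFg : e ∉ F \ g := fun h => heF (Finset.mem_sdiff.mp h).1
  rw [liveProb, liveProb, Finset.insert_sdiff_of_notMem _ heg, Finset.prod_insert heFg]
  ring

lemma liveProb_insert_insert (heF : e ∉ F) (heg : e ∉ g) :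
    liveProb (insert e F) p (insert e g) = p e * liveProb F p g := by
  rw [liveProb, liveProb, Finset.insert_sdiff_insert, Finset.sdiff_insert_of_notMem heF,
    Finset.prod_insert heg]
  ring

theorem sum_powerset_insert_liveProb_mul (heF : e ∉ F) (f : Finset (V × V) → ℝ) :
    ∑ g ∈ (insert e F).powerset, liveProb (insert e F) p g * f g
      = p e * ∑ g ∈ F.powerset, liveProb F p g * f (insert e g)
        + (1 - p e) * ∑ g ∈ F.powerset, liveProb F p g * f g := by
  rw [Finset.sum_powerset_insert heF, add_comm, Finset.mul_sum, Finset.mul_sum]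
  congr 1 <;> refine Finset.sum_congr rfl fun g hg => ?_
  · rw [liveProb_insert_insert p heF (Finset.notMem_of_mem_powerset_of_notMem hg heF)]
    ring
  · rw [liveProb_insert_of_notMem p heF (Finset.notMem_of_mem_powerset_of_notMem hg heF)]
    ring

theorem expSpread_insert_edge_of_mem {S : Finset V} {u v : V} (hu : u ∈ S)
    (he : (u, v) ∉ F) :
    expSpread (insert (u, v) F) p S
      = p (u, v) * expSpread F p (insert v S) + (1 - p (u, v)) * expSpread F p S := by
  simp only [expSpread, sum_powerset_insert_liveProb_mul p he, reach_insert_edge_of_mem hu]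

end

theorem augmented_spread_add_edge_general {V : Type*} [DecidableEq V]
    (E A : Finset (V × V)) (p : V × V → ℝ)
    (S : Finset V) (u v : V)
    (hu : u ∈ S) (he : (u, v) ∉ E ∪ A) :
    expSpread (E ∪ (A ∪ {(u, v)})) p S
      = p (u, v) * expSpread (E ∪ A) p (insert v S)
        + (1 - p (u, v)) * expSpread (E ∪ A) p S := by
  have hunion : E ∪ (A ∪ {(u, v)}) = insert (u, v) (E ∪ A) := by
    rw [← Finset.union_assoc, Finset.union_comm, Finset.singleton_union]
  rw [hunion, expSpread_insert_edge_of_mem p hu he]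

/-- Lemma 3 (IC model): for a seed set `S`, already-added edges `A` disjoint from `E`, and
a further candidate edge `e = ⟨u,v⟩ ∉ E ∪ A` with `u ∈ S`,
`σ(A ∪ {e}, S) = p_{u,v} · σ(A, S ∪ {v}) + (1 − p_{u,v}) · σ(A, S)`. -/
theorem augmented_spread_add_edge {V : Type*} [Fintype V] [DecidableEq V]
    (E A : Finset (V × V)) (p : V × V → ℝ)
    (hp : ∀ e, 0 ≤ p e ∧ p e ≤ 1)
    (hEA : Disjoint E A)
    (S : Finset V) (u v : V)
    (hu : u ∈ S) (he : (u, v) ∉ E ∪ A) :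
    expSpread (E ∪ (A ∪ {(u, v)})) p S
      = p (u, v) * expSpread (E ∪ A) p (insert v S)
        + (1 - p (u, v)) * expSpread (E ∪ A) p S :=
  augmented_spread_add_edge_general E A p S u v hu he
end
end

section
/- For any seed set S ⊆ V, the expected spread satisfies σ_E(S) = n · Pr[S ∩ R ≠ ∅], where R is a random reverse reachable (RR) set; explicitly, Σ_{g⊆E} Pr[g] · I_g(S) = n · (1/n) · Σ_{v∈V} Σ_{g⊆E} Pr[g] · 1[RR(v, g) ∩ S ≠ ∅]. -/
open scoped Classical

noncomputable section

/-- The reverse reachable set of `v` in `g`: all nodes `u` such that `v ∈ Reach({u}, g)`. -/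
def RR {V : Type*} (v : V) (g : Finset (V × V)) : Set V :=
  {u | v ∈ Reach {u} g}

lemma mem_Reach_iff {V : Type*} (S : Finset V) (g : Finset (V × V)) (v : V) :
    v ∈ Reach S g ↔ (RR v g ∩ (S : Set V)).Nonempty := by
  simp only [Reach, RR, Set.mem_setOf_eq, Set.Nonempty, Set.mem_inter_iff,
    Finset.mem_coe, Finset.mem_singleton]
  constructor
  · rintro ⟨s, hs, h⟩
    exact ⟨s, ⟨s, rfl, h⟩, hs⟩
  · rintro ⟨w, ⟨u, hu, h⟩, hw⟩
    exact ⟨w, hw, hu ▸ h⟩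

lemma ncard_Reach {V : Type*} [Fintype V] [DecidableEq V] (S : Finset V)
    (g : Finset (V × V)) :
    ((Reach S g).ncard : ℝ)
      = ∑ v : V, (if (RR v g ∩ (S : Set V)).Nonempty then (1 : ℝ) else 0) := by
  have h : (Reach S g).ncard = (Finset.univ.filter (fun v => v ∈ Reach S g)).card := by
    rw [Set.ncard_eq_toFinset_card']
    congr 1
    ext v
    simp
  rw [h]
  rw [Finset.card_filter]
  push_cast
  apply Finset.sum_congr rfl
  intro v _
  simp [mem_Reach_iff]

/-- `σ_E(S) = n · Pr[S ∩ R ≠ ∅]` for a random RR set `R`, explicitly: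
`Σ_{g⊆E} Pr[g] I_g(S) = n · (1/n) · Σ_{v∈V} Σ_{g⊆E} Pr[g] · 1[RR(v,g) ∩ S ≠ ∅]`. -/
theorem expSpread_eq_n_mul_prob_RR {V : Type*} [Fintype V] [DecidableEq V]
    (E : Finset (V × V)) (p : V × V → ℝ)
    (hp : ∀ e, 0 ≤ p e ∧ p e ≤ 1)
    (S : Finset V) :
    expSpread E p S
      = (Fintype.card V : ℝ) *
          ((1 / (Fintype.card V : ℝ)) *
            ∑ v : V, ∑ g ∈ E.powerset,
              liveProb E p g * (if (RR v g ∩ (S : Set V)).Nonempty then (1 : ℝ) else 0)) := by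
  rw [Finset.sum_comm]
  rcases Nat.eq_zero_or_pos (Fintype.card V) with h0 | hpos
  · have : IsEmpty V := Fintype.card_eq_zero_iff.mp h0
    simp only [h0, Nat.cast_zero, zero_mul]
    unfold expSpread
    apply Finset.sum_eq_zero
    intro g _
    have : Reach S g = ∅ := Set.eq_empty_of_isEmpty _
    simp [this]
  · have hn : (Fintype.card V : ℝ) ≠ 0 := by positivity
    rw [← mul_assoc, mul_one_div, div_self hn, one_mul]
    unfold expSpread
    apply Finset.sum_congr rfl
    intro g _
    rw [ncard_Reach, Finset.mul_sum]
end
end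

section
/- Fix a seed set S ⊆ V and an integer θ ≥ 1. Let (v_1, g_1), …, (v_θ, g_θ) be independent samples, each with v_i uniform on V and g_i an independent live-edge sample, and set R_i = RR(v_i, g_i). Then the expectation of (n/θ) · Λ_{𝓡}(S), where Λ_{𝓡}(S) = |{i ∈ {1,…,θ} : R_i ∩ S ≠ ∅}|, equals σ_E(S); i.e., (n/θ) · Λ_{𝓡}(S) is an unbiased estimator of the expected spread of S. -/
/-!
Sampling `v` uniformly and `g` from the live-edge distribution, the event `R ∩ S ≠ ∅` for
`R = RR(v, g)` is the event `v ∈ Reach(S, g)`, whose probability is `σ_E(S) / n` once the sum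
over `v` is exchanged with the sum over `g`. Linearity of expectation over the `θ` independent
samples, each contributing this probability, then gives `E[Λ_𝓡(S)] = θ · σ_E(S) / n`.
-/

open scoped Classical

noncomputable section

open Finset

theorem Finset.sum_piFinset_prod_mul_apply {ι α R : Type*} [Fintype ι] [DecidableEq ι]
    [CommSemiring R] (s : Finset α) (w f : α → R) (hw : ∑ x ∈ s, w x = 1) (i : ι) :
    ∑ xs ∈ Fintype.piFinset (fun _ : ι => s), (∏ j, w (xs j)) * f (xs i) =
      ∑ x ∈ s, w x * f x := by
  have hsummand : ∀ xs : ι → α, (∏ j, w (xs j)) * f (xs i) =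
      ∏ j, w (xs j) * (if j = i then f (xs j) else 1) := fun xs => by
    rw [prod_mul_distrib, prod_ite_eq' univ i, if_pos (mem_univ i)]
  have hfactor : ∀ j, ∑ x ∈ s, w x * (if j = i then f x else 1) =
      if j = i then ∑ x ∈ s, w x * f x else 1 := fun j => by
    by_cases hj : j = i <;> simp [hj, hw]
  rw [sum_congr rfl fun xs _ => hsummand xs,
    sum_prod_piFinset s fun j x => w x * if j = i then f x else 1]
  simp only [hfactor, prod_ite_eq', mem_univ, if_true]

theorem Set.sum_ite_mem_eq_ncard {α R : Type*} [Fintype α] [AddCommMonoidWithOne R]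
    (A : Set α) [DecidablePred (· ∈ A)] :
    ∑ v, (if v ∈ A then (1 : R) else 0) = A.ncard := by
  rw [sum_boole, Set.ncard_eq_toFinset_card']
  simp

theorem liveProb_sum_powerset {V : Type*} [DecidableEq V] (F : Finset (V × V))
    (p : V × V → ℝ) : ∑ g ∈ F.powerset, liveProb F p g = 1 := by
  simp only [liveProb]
  rw [← prod_add]
  simp

theorem RR_inter_nonempty_iff {V : Type*} (v : V) (g : Finset (V × V)) (S : Finset V) :
    (RR v g ∩ (S : Set V)).Nonempty ↔ v ∈ Reach S g := by
  constructor
  · rintro ⟨u, ⟨s, hs, hsv⟩, huS⟩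
    rw [mem_singleton] at hs
    subst hs
    exact ⟨s, huS, hsv⟩
  · rintro ⟨s, hs, hsv⟩
    exact ⟨s, ⟨s, mem_singleton_self s, hsv⟩, hs⟩

theorem expSpread_eq_sum_sum_liveProb {V : Type*} [Fintype V] [DecidableEq V]
    (F : Finset (V × V)) (p : V × V → ℝ) (S : Finset V) :
    expSpread F p S =
      ∑ v, ∑ g ∈ F.powerset, liveProb F p g * (if v ∈ Reach S g then 1 else 0) := by
  rw [sum_comm, expSpread]
  simp_rw [← mul_sum, Set.sum_ite_mem_eq_ncard]

theorem expSpread_of_isEmpty {V : Type*} [IsEmpty V] [DecidableEq V]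
    (F : Finset (V × V)) (p : V × V → ℝ) (S : Finset V) : expSpread F p S = 0 := by
  simp [expSpread, Set.eq_empty_of_isEmpty]

theorem card_filter_RR_inter_nonempty {ι V : Type*} [Fintype ι] (vs : ι → V)
    (gs : ι → Finset (V × V)) (S : Finset V) :
    ((univ.filter fun i => (RR (vs i) (gs i) ∩ (S : Set V)).Nonempty).card : ℝ) =
      ∑ i, if vs i ∈ Reach S (gs i) then 1 else 0 := by
  rw [card_filter]
  push_cast
  simp only [RR_inter_nonempty_iff]

theorem sum_uniform_liveProb_mul_mem_Reach {ι V : Type*} [Fintype ι] [DecidableEq ι]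
    [Fintype V] [Nonempty V] [DecidableEq V] (F : Finset (V × V)) (p : V × V → ℝ)
    (S : Finset V) (i : ι) :
    ∑ vs : ι → V, ∑ gs ∈ Fintype.piFinset (fun _ : ι => F.powerset),
        (∏ j, 1 / (Fintype.card V : ℝ) * liveProb F p (gs j)) *
          (if vs i ∈ Reach S (gs i) then 1 else 0) =
      expSpread F p S / Fintype.card V := by
  set n : ℝ := (Fintype.card V : ℝ)
  have huniform : ∑ _v : V, 1 / n = 1 := by simp [n]
  have hlive (vs : ι → V) :
      ∑ gs ∈ Fintype.piFinset (fun _ => F.powerset),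
          (∏ j, 1 / n * liveProb F p (gs j)) * (if vs i ∈ Reach S (gs i) then 1 else 0) =
        (∏ _j : ι, 1 / n) *
          ∑ g ∈ F.powerset, liveProb F p g * (if vs i ∈ Reach S g then 1 else 0) := by
    simp_rw [prod_mul_distrib, mul_assoc, ← mul_sum]
    rw [sum_piFinset_prod_mul_apply _ _ (fun g => if vs i ∈ Reach S g then 1 else 0)
      (liveProb_sum_powerset F p) i]
  rw [sum_congr rfl fun vs _ => hlive vs, ← Fintype.piFinset_univ,
    sum_piFinset_prod_mul_apply _ (fun _ => 1 / n)
      (fun v => ∑ g ∈ F.powerset, liveProb F p g * if v ∈ Reach S g then 1 else 0) huniform i,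
    expSpread_eq_sum_sum_liveProb, ← mul_sum, one_div_mul_eq_div]

theorem rr_estimator_unbiased_general {V : Type*} [Fintype V] [DecidableEq V]
    (E : Finset (V × V)) (p : V × V → ℝ)
    (S : Finset V) (θ : ℕ) (hθ : 1 ≤ θ) :
    (∑ vs : Fin θ → V, ∑ gs ∈ Fintype.piFinset (fun _ : Fin θ => E.powerset),
        (∏ i, (1 / (Fintype.card V : ℝ)) * liveProb E p (gs i)) *
          (((Fintype.card V : ℝ) / (θ : ℝ)) *
            ((Finset.univ.filter
                (fun i : Fin θ => (RR (vs i) (gs i) ∩ (S : Set V)).Nonempty)).card : ℝ)))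
      = expSpread E p S := by
  have : Nonempty (Fin θ) := ⟨⟨0, hθ⟩⟩
  rcases isEmpty_or_nonempty V with hV | hV
  · simp [expSpread_of_isEmpty]
  have hn : (Fintype.card V : ℝ) ≠ 0 := Nat.cast_ne_zero.mpr Fintype.card_ne_zero
  calc _ = ∑ i, (Fintype.card V : ℝ) / θ *
          ∑ vs : Fin θ → V, ∑ gs ∈ Fintype.piFinset (fun _ => E.powerset),
            (∏ j, 1 / (Fintype.card V : ℝ) * liveProb E p (gs j)) *
              (if vs i ∈ Reach S (gs i) then 1 else 0) := by
        simp_rw [card_filter_RR_inter_nonempty, mul_sum,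
          mul_left_comm _ ((Fintype.card V : ℝ) / θ)]
        conv_lhs => enter [2, vs]; rw [sum_comm]
        exact sum_comm
    _ = ∑ _i : Fin θ, (Fintype.card V : ℝ) / θ * (expSpread E p S / Fintype.card V) := by
        simp_rw [sum_uniform_liveProb_mul_mem_Reach]
    _ = expSpread E p S := by
        rw [sum_const, card_univ, Fintype.card_fin, nsmul_eq_mul]
        field_simp

/-- Unbiasedness of the RR-set estimator: for `θ ≥ 1` i.i.d. random RR sets
`R_i = RR(v_i, g_i)` (with `v_i` uniform on `V` and `g_i` an independent live-edge sample),
the expectation of `(n/θ) · Λ_𝓡(S)`, where `Λ_𝓡(S) = |{i : R_i ∩ S ≠ ∅}|`,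
equals the expected spread `σ_E(S)`. -/
theorem rr_estimator_unbiased {V : Type*} [Fintype V] [DecidableEq V]
    (E : Finset (V × V)) (p : V × V → ℝ)
    (hp : ∀ e, 0 ≤ p e ∧ p e ≤ 1)
    (S : Finset V) (θ : ℕ) (hθ : 1 ≤ θ) :
    (∑ vs : Fin θ → V, ∑ gs ∈ Fintype.piFinset (fun _ : Fin θ => E.powerset),
        (∏ i, (1 / (Fintype.card V : ℝ)) * liveProb E p (gs i)) *
          (((Fintype.card V : ℝ) / (θ : ℝ)) *
            ((Finset.univ.filter
                (fun i : Fin θ => (RR (vs i) (gs i) ∩ (S : Set V)).Nonempty)).card : ℝ)))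
      = expSpread E p S :=
  rr_estimator_unbiased_general E p S θ hθ
end
end

section
/- Let f be a monotone submodular set function on subsets of a finite ground set U with f(∅) = 0 and f ≥ 0, let k ≥ 1, let ε > 0, and let 0 < λ ≤ (ε/k) / (2 + ε/k). Suppose f̂ is a multiplicative λ-error estimate of f, i.e., (1 − λ) f(A) ≤ f̂(A) ≤ (1 + λ) f(A) for all A ⊆ U. Let A^g = A_k be produced by the greedy algorithm on f̂: A_0 = ∅ and for each i, A_{i+1} = A_i ∪ {x_i} where x_i ∈ U ∖ A_i satisfies f̂(A_i ∪ {x_i}) ≥ f̂(A_i ∪ {x}) for all x ∈ U ∖ A_i. Then f(A^g) ≥ (1 − 1/e − ε) · f(A*), where A* is a set of size at most k maximizing f. -/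
open scoped Classical

noncomputable section

lemma submod_union_sum_bound {U : Type*} [DecidableEq U]
    (f : Finset U → ℝ)
    (hmono : ∀ A B : Finset U, A ⊆ B → f A ≤ f B)
    (hsub : ∀ A B : Finset U, A ⊆ B → ∀ x ∉ B,
      f (insert x B) - f B ≤ f (insert x A) - f A)
    (A : Finset U) :
    ∀ S : Finset U, f (A ∪ S) ≤ f A + ∑ y ∈ S, (f (insert y A) - f A) := by
  intro S
  induction S using Finset.induction with
  | empty => simp
  | @insert z S hz ih =>
    rw [Finset.union_insert, Finset.sum_insert hz]
    have hmz : 0 ≤ f (insert z A) - f A := by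
      have := hmono A (insert z A) (Finset.subset_insert _ _)
      linarith
    by_cases hzAS : z ∈ A ∪ S
    · rw [Finset.insert_eq_self.mpr hzAS]
      linarith
    · have := hsub A (A ∪ S) Finset.subset_union_left z hzAS
      linarith

/-- Greedy on a multiplicative `λ`-error estimate `fhat` of a monotone submodular
nonnegative function `f` with `f(∅) = 0` attains a `(1 − 1/e − ε)`-approximation,
provided `0 < λ ≤ (ε/k)/(2 + ε/k)`. -/
theorem greedy_on_estimate_approx {U : Type*} [Fintype U] [DecidableEq U]
    (f fhat : Finset U → ℝ)
    (hmono : ∀ A B : Finset U, A ⊆ B → f A ≤ f B)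
    (hsub : ∀ A B : Finset U, A ⊆ B → ∀ x ∉ B,
      f (insert x B) - f B ≤ f (insert x A) - f A)
    (hzero : f ∅ = 0) (hnonneg : ∀ A : Finset U, 0 ≤ f A)
    (k : ℕ) (hk : 1 ≤ k) (ε : ℝ) (hε : 0 < ε)
    (lam : ℝ) (hlam0 : 0 < lam) (hlam1 : lam ≤ (ε / (k : ℝ)) / (2 + ε / (k : ℝ)))
    (hest : ∀ A : Finset U, (1 - lam) * f A ≤ fhat A ∧ fhat A ≤ (1 + lam) * f A)
    (Aseq : ℕ → Finset U) (h0 : Aseq 0 = ∅)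
    (hstep : ∀ i < k, ∃ x ∉ Aseq i, Aseq (i + 1) = insert x (Aseq i) ∧
        ∀ y ∉ Aseq i, fhat (insert y (Aseq i)) ≤ fhat (insert x (Aseq i)))
    (Aopt : Finset U) (hcard : Aopt.card ≤ k)
    (hopt : ∀ B : Finset U, B.card ≤ k → f B ≤ f Aopt) :
    (1 - 1 / Real.exp 1 - ε) * f Aopt ≤ f (Aseq k) := by
  set OPT := f Aopt with hOPT
  clear_value OPT
  have hk0 : (0 : ℝ) < (k : ℝ) := by exact_mod_cast hk
  set t : ℝ := ε / (k : ℝ) with ht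
  clear_value t
  have ht0 : 0 < t := by rw [ht]; exact div_pos hε hk0
  -- lam bounds
  have hlam' : lam * (2 + t) ≤ t := by
    have h2t : (0 : ℝ) < 2 + t := by linarith
    exact (le_div_iff₀ h2t).mp hlam1
  have hlam_lt1 : lam < 1 := by nlinarith
  set α : ℝ := (1 - lam) / (1 + lam) with hα
  clear_value α
  have h1lam : (0 : ℝ) < 1 + lam := by linarith
  have hα0 : 0 < α := by rw [hα]; exact div_pos (by linarith) h1lam
  have hα1 : α ≤ 1 := by
    rw [hα, div_le_one h1lam]; linarith
  have hα_lb : 1 / (1 + t) ≤ α := by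
    rw [hα, div_le_div_iff₀ (by linarith) h1lam]
    nlinarith
  set β : ℝ := 1 - 1 / (k : ℝ) with hβ
  clear_value β
  have hβ0 : 0 ≤ β := by
    have : 1 / (k : ℝ) ≤ 1 := by
      rw [div_le_one hk0]; exact_mod_cast hk
    linarith
  have hβ1 : β < 1 := by
    have : 0 < 1 / (k : ℝ) := by positivity
    simp only [hβ]; linarith
  have hOPT0 : 0 ≤ OPT := hOPT ▸ hnonneg Aopt
  -- main induction
  have key : ∀ i ≤ k, α ^ i * (1 - β ^ i) * OPT ≤ f (Aseq i) := by
    intro i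
    induction i with
    | zero => intro _; simp [h0, hzero]
    | succ i ih =>
      intro hik
      have hik' : i < k := hik
      have hIH := ih (le_of_lt hik')
      obtain ⟨x, hx, hA1, hmax⟩ := hstep i hik'
      have hsubset : Aseq i ⊆ Aseq (i + 1) := by
        rw [hA1]; exact Finset.subset_insert _ _
      have hmono_step : f (Aseq i) ≤ f (Aseq (i + 1)) := hmono _ _ hsubset
      have hαi0 : (0 : ℝ) < α ^ i := pow_pos hα0 i
      have hαi1 : α ^ i ≤ 1 := pow_le_one₀ (le_of_lt hα0) hα1
      have hαsi1 : α ^ (i + 1) ≤ 1 := pow_le_one₀ (le_of_lt hα0) hα1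
      have hβi0 : (0 : ℝ) ≤ β ^ i := pow_nonneg hβ0 i
      have hβi1 : β ^ i ≤ 1 := pow_le_one₀ hβ0 (le_of_lt hβ1)
      have hβsi0 : (0 : ℝ) ≤ β ^ (i + 1) := pow_nonneg hβ0 _
      have hβsi1 : β ^ (i + 1) ≤ 1 := pow_le_one₀ hβ0 (le_of_lt hβ1)
      by_cases hcase : OPT ≤ f (Aseq i)
      · have hc1 : α ^ (i + 1) * (1 - β ^ (i + 1)) ≤ 1 := by
          calc α ^ (i + 1) * (1 - β ^ (i + 1)) ≤ 1 * (1 - β ^ (i + 1)) :=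
                mul_le_mul_of_nonneg_right hαsi1 (by linarith)
            _ ≤ 1 := by linarith
        have hc : α ^ (i + 1) * (1 - β ^ (i + 1)) * OPT ≤ 1 * OPT :=
          mul_le_mul_of_nonneg_right hc1 hOPT0
        rw [one_mul] at hc
        linarith
      · push_neg at hcase
        -- find good element y
        have hsum := submod_union_sum_bound f hmono hsub (Aseq i) Aopt
        have hOPTle : OPT ≤ f (Aseq i ∪ Aopt) :=
          hOPT ▸ hmono Aopt (Aseq i ∪ Aopt) Finset.subset_union_right
        have hsumpos : 0 < ∑ y ∈ Aopt, (f (insert y (Aseq i)) - f (Aseq i)) := by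
          linarith
        have hne : Aopt.Nonempty := by
          by_contra hne
          rw [Finset.not_nonempty_iff_eq_empty] at hne
          rw [hne] at hsumpos
          simp at hsumpos
        have hcard0 : (0 : ℝ) < (Aopt.card : ℝ) := by
          exact_mod_cast Finset.card_pos.mpr hne
        have hconst : ∑ _y ∈ Aopt, (OPT - f (Aseq i)) / (Aopt.card : ℝ) =
            OPT - f (Aseq i) := by
          rw [Finset.sum_const, nsmul_eq_mul]
          field_simp
        have hsum2 : ∑ _y ∈ Aopt, (OPT - f (Aseq i)) / (Aopt.card : ℝ) ≤
            ∑ y ∈ Aopt, (f (insert y (Aseq i)) - f (Aseq i)) := by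
          rw [hconst]; linarith
        obtain ⟨y, hyA, hy⟩ := Finset.exists_le_of_sum_le hne hsum2
        have hyk : (OPT - f (Aseq i)) / (k : ℝ) ≤
            f (insert y (Aseq i)) - f (Aseq i) := by
          have hcardk : (Aopt.card : ℝ) ≤ (k : ℝ) := by exact_mod_cast hcard
          have : (OPT - f (Aseq i)) / (k : ℝ) ≤
              (OPT - f (Aseq i)) / (Aopt.card : ℝ) :=
            div_le_div_of_nonneg_left (by linarith) hcard0 hcardk
          linarith
        have hypos : 0 < f (insert y (Aseq i)) - f (Aseq i) := by
          have : 0 < (OPT - f (Aseq i)) / (k : ℝ) := div_pos (by linarith) hk0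
          linarith
        have hynot : y ∉ Aseq i := by
          intro hyin
          rw [Finset.insert_eq_self.mpr hyin] at hypos
          linarith
        -- estimate chain
        have e1 := (hest (insert y (Aseq i))).1
        have e2 := hmax y hynot
        have e3 : fhat (insert x (Aseq i)) ≤ (1 + lam) * f (Aseq (i + 1)) := by
          rw [hA1]; exact (hest _).2
        have echain : (1 - lam) * f (insert y (Aseq i)) ≤
            (1 + lam) * f (Aseq (i + 1)) := by linarith
        have hstep_ineq : α * (β * f (Aseq i) + OPT / (k : ℝ)) ≤ f (Aseq (i + 1)) := by
          rw [hα]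
          rw [div_mul_eq_mul_div, div_le_iff₀ h1lam]
          have hfy : f (Aseq i) + (OPT - f (Aseq i)) / (k : ℝ) ≤
              f (insert y (Aseq i)) := by linarith
          have hexp : β * f (Aseq i) + OPT / (k : ℝ) =
              f (Aseq i) + (OPT - f (Aseq i)) / (k : ℝ)  := by
            rw [hβ]; field_simp; ring
          rw [hexp]
          calc (1 - lam) * (f (Aseq i) + (OPT - f (Aseq i)) / (k : ℝ))
              ≤ (1 - lam) * f (insert y (Aseq i)) :=
                mul_le_mul_of_nonneg_left hfy (by linarith)
            _ ≤ (1 + lam) * f (Aseq (i + 1)) := echain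
            _ = f (Aseq (i + 1)) * (1 + lam) := by ring
        -- conclude the induction step by algebra
        have halg : α ^ (i + 1) * (1 - β ^ (i + 1)) * OPT ≤
            α * (β * f (Aseq i) + OPT / (k : ℝ)) := by
          have h1 : α ^ (i + 1) = α ^ i * α := by ring
          have h2 : β ^ (i + 1) = β ^ i * β := by ring
          have hβg : α ^ i * β * (1 - β ^ i) * OPT ≤ β * f (Aseq i) := by
            have h := mul_le_mul_of_nonneg_left hIH hβ0
            calc α ^ i * β * (1 - β ^ i) * OPT
                = β * (α ^ i * (1 - β ^ i) * OPT) := by ring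
              _ ≤ β * f (Aseq i) := h
          have hrest : α ^ i * OPT / (k : ℝ) ≤ OPT / (k : ℝ) := by
            apply div_le_div_of_nonneg_right _ hk0.le
            exact mul_le_of_le_one_left hOPT0 hαi1
          rw [h1, h2]
          have hexpand : α ^ i * α * (1 - β ^ i * β) * OPT =
              α * (α ^ i * β * (1 - β ^ i) * OPT + α ^ i * OPT * (1 - β) ) := by
            ring
          have h1β : 1 - β = 1 / (k : ℝ) := by rw [hβ]; ring
          rw [hexpand, h1β]
          apply mul_le_mul_of_nonneg_left _ (le_of_lt hα0)
          have : α ^ i * OPT * (1 / (k : ℝ)) = α ^ i * OPT / (k : ℝ) := by ring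
          rw [this]
          have : OPT / (k : ℝ) = OPT * (1 / (k : ℝ)) := by ring
          linarith [hβg, hrest]
        linarith
  have hkey := key k le_rfl
  -- bound the coefficient
  have hβk : β ^ k ≤ 1 / Real.exp 1 := by
    have h1 : β ≤ Real.exp (-(1 / (k : ℝ))) := by
      have := Real.add_one_le_exp (-(1 / (k : ℝ)))
      rw [hβ]; linarith
    calc β ^ k ≤ (Real.exp (-(1 / (k : ℝ)))) ^ k := pow_le_pow_left₀ hβ0 h1 k
      _ = Real.exp (-(1 / (k : ℝ)) * k) := by rw [← Real.exp_nat_mul]; ring_nf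
      _ = Real.exp (-1) := by
          congr 1
          field_simp
      _ = 1 / Real.exp 1 := by rw [Real.exp_neg]; ring
  have hαk : Real.exp (-ε) ≤ α ^ k := by
    have h1 : 1 + t ≤ Real.exp t := by
      have := Real.add_one_le_exp t; linarith
    have h1t : (0 : ℝ) < 1 + t := by linarith
    have h2 : (1 + t) ^ k ≤ Real.exp ε := by
      calc (1 + t) ^ k ≤ (Real.exp t) ^ k := pow_le_pow_left₀ (le_of_lt h1t) h1 k
        _ = Real.exp (t * k) := by rw [← Real.exp_nat_mul]; ring_nf
        _ = Real.exp ε := by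
            congr 1
            rw [ht]; field_simp
    calc Real.exp (-ε) = 1 / Real.exp ε := by rw [Real.exp_neg]; ring
      _ ≤ 1 / (1 + t) ^ k := by
          apply div_le_div_of_nonneg_left one_pos.le (by positivity) h2
      _ = (1 / (1 + t)) ^ k := by rw [div_pow, one_pow]
      _ ≤ α ^ k := pow_le_pow_left₀ (by positivity) hα_lb k
  have he1 : (1 : ℝ) ≤ Real.exp 1 := by
    linarith [Real.add_one_le_exp (1 : ℝ)]
  have hinv : 1 / Real.exp 1 ≤ 1 := by
    rw [div_le_one (Real.exp_pos 1)]; exact he1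
  have hcoef : 1 - 1 / Real.exp 1 - ε ≤ α ^ k * (1 - β ^ k) := by
    have h1 : Real.exp (-ε) * (1 - 1 / Real.exp 1) ≤ α ^ k * (1 - β ^ k) := by
      apply mul_le_mul hαk (by linarith) (by linarith) (pow_nonneg (le_of_lt hα0) k)
    have h2 : 1 - ε ≤ Real.exp (-ε) := by
      linarith [Real.add_one_le_exp (-ε)]
    have h3 : (1 - ε) * (1 - 1 / Real.exp 1) ≤ Real.exp (-ε) * (1 - 1 / Real.exp 1) :=
      mul_le_mul_of_nonneg_right h2 (by linarith)
    have h4 : 1 - 1 / Real.exp 1 - ε ≤ (1 - ε) * (1 - 1 / Real.exp 1) := by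
      have hεe : 0 ≤ ε * (1 / Real.exp 1) := by positivity
      nlinarith
    linarith
  calc (1 - 1 / Real.exp 1 - ε) * OPT ≤ α ^ k * (1 - β ^ k) * OPT :=
        mul_le_mul_of_nonneg_right hcoef hOPT0
    _ ≤ f (Aseq k) := hkey
end
end

section
/- Let f be a monotone submodular set function on subsets of a finite ground set U with f(∅) = 0 and f ≥ 0, and let k ≥ 1. Let A^g = A_k be produced by the exact greedy algorithm: A_0 = ∅ and for each i, A_{i+1} = A_i ∪ {x_i} where x_i ∈ U ∖ A_i satisfies f(A_i ∪ {x_i}) ≥ f(A_i ∪ {x}) for all x ∈ U ∖ A_i. Then f(A^g) ≥ (1 − 1/e) · f(A*), where A* is a set of size at most k maximizing f. -/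
open scoped Classical

noncomputable section

/-- Submodular sum bound: the marginal value of adding `B` to `A` is at most the sum of
individual marginals. -/
lemma submod_sum_bound {U : Type*} [Fintype U] [DecidableEq U]
    (f : Finset U → ℝ)
    (hsub : ∀ A B : Finset U, A ⊆ B → ∀ x ∉ B,
      f (insert x B) - f B ≤ f (insert x A) - f A)
    (A : Finset U) (B : Finset U) :
    f (A ∪ B) - f A ≤ ∑ x ∈ B \ A, (f (insert x A) - f A) := by
  induction B using Finset.induction_on with
  | empty => simp
  | @insert b B hb ih =>
    by_cases hbA : b ∈ A
    · have h1 : A ∪ insert b B = A ∪ B := by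
        rw [Finset.union_insert, Finset.insert_eq_self.2 (Finset.mem_union_left _ hbA)]
      have h2 : insert b B \ A = B \ A := Finset.insert_sdiff_of_mem _ hbA
      rw [h1, h2]; exact ih
    · have hbAB : b ∉ A ∪ B := by
        simp only [Finset.mem_union]; tauto
      have h1 : A ∪ insert b B = insert b (A ∪ B) := Finset.union_insert _ _ _
      have h2 : insert b B \ A = insert b (B \ A) := Finset.insert_sdiff_of_notMem _ hbA
      have hbBA : b ∉ B \ A := fun h => hb (Finset.mem_sdiff.1 h).1
      rw [h1, h2, Finset.sum_insert hbBA]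
      have hkey := hsub A (A ∪ B) Finset.subset_union_left b hbAB
      linarith [ih]

/-- The exact greedy algorithm on a monotone submodular nonnegative function `f`
with `f(∅) = 0` attains a `(1 − 1/e)`-approximation to the size-`k` constrained maximum. -/
theorem greedy_approx {U : Type*} [Fintype U] [DecidableEq U]
    (f : Finset U → ℝ)
    (hmono : ∀ A B : Finset U, A ⊆ B → f A ≤ f B)
    (hsub : ∀ A B : Finset U, A ⊆ B → ∀ x ∉ B,
      f (insert x B) - f B ≤ f (insert x A) - f A)
    (hzero : f ∅ = 0) (hnonneg : ∀ A : Finset U, 0 ≤ f A)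
    (k : ℕ) (hk : 1 ≤ k)
    (Aseq : ℕ → Finset U) (h0 : Aseq 0 = ∅)
    (hstep : ∀ i < k, ∃ x ∉ Aseq i, Aseq (i + 1) = insert x (Aseq i) ∧
        ∀ y ∉ Aseq i, f (insert y (Aseq i)) ≤ f (insert x (Aseq i)))
    (Aopt : Finset U) (hcard : Aopt.card ≤ k)
    (hopt : ∀ B : Finset U, B.card ≤ k → f B ≤ f Aopt) :
    (1 - 1 / Real.exp 1) * f Aopt ≤ f (Aseq k) := by
  set OPT := f Aopt with hOPT
  have hOPT0 : 0 ≤ OPT := hnonneg _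
  have hk0 : (0:ℝ) < (k:ℝ) := by exact_mod_cast hk.trans_lt' Nat.zero_lt_one
  have hc : (0:ℝ) ≤ 1 - 1/(k:ℝ) := by
    have : 1/(k:ℝ) ≤ 1 := by
      rw [div_le_one hk0]; exact_mod_cast hk
    linarith
  -- key recursion
  have key : ∀ i < k, OPT - f (Aseq (i+1)) ≤ (1 - 1/(k:ℝ)) * (OPT - f (Aseq i)) := by
    intro i hi
    obtain ⟨x, hx, hins, hmax⟩ := hstep i hi
    set δ := f (Aseq (i+1)) - f (Aseq i) with hδ
    have hδ0 : 0 ≤ δ := by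
      have := hmono (Aseq i) (Aseq (i+1)) (by rw [hins]; exact Finset.subset_insert _ _)
      linarith
    have h1 : OPT - f (Aseq i) ≤ (k:ℝ) * δ := by
      have ha : OPT ≤ f (Aseq i ∪ Aopt) :=
        hmono _ _ Finset.subset_union_right
      have hb := submod_sum_bound f hsub (Aseq i) Aopt
      have hterm : ∀ y ∈ Aopt \ Aseq i, f (insert y (Aseq i)) - f (Aseq i) ≤ δ := by
        intro y hy
        have hy' : y ∉ Aseq i := (Finset.mem_sdiff.1 hy).2
        have := hmax y hy'
        rw [hδ, hins]; linarith
      have hsum : ∑ y ∈ Aopt \ Aseq i, (f (insert y (Aseq i)) - f (Aseq i))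
          ≤ (Aopt \ Aseq i).card • δ := Finset.sum_le_card_nsmul _ _ _ hterm
      have hcard' : ((Aopt \ Aseq i).card : ℝ) ≤ (k:ℝ) := by
        exact_mod_cast (Finset.card_le_card (Finset.sdiff_subset)).trans hcard
      have : ((Aopt \ Aseq i).card : ℝ) * δ ≤ (k:ℝ) * δ :=
        mul_le_mul_of_nonneg_right hcard' hδ0
      rw [nsmul_eq_mul] at hsum
      linarith
    have h2 : (OPT - f (Aseq i)) / (k:ℝ) ≤ δ := by
      rw [div_le_iff₀ hk0]; linarith
    have hring : (1 - 1/(k:ℝ)) * (OPT - f (Aseq i))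
        = (OPT - f (Aseq i)) - (OPT - f (Aseq i)) / (k:ℝ) := by ring
    rw [hring]; linarith
  -- iterate
  have hiter : ∀ i ≤ k, OPT - f (Aseq i) ≤ (1 - 1/(k:ℝ))^i * OPT := by
    intro i
    induction i with
    | zero => intro _; simp [h0, hzero]
    | succ n ih =>
      intro hn
      have hn' : n < k := hn
      have h1 := key n hn'
      have h2 := ih (le_of_lt hn')
      calc OPT - f (Aseq (n+1)) ≤ (1 - 1/(k:ℝ)) * (OPT - f (Aseq n)) := h1
        _ ≤ (1 - 1/(k:ℝ)) * ((1 - 1/(k:ℝ))^n * OPT) :=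
            mul_le_mul_of_nonneg_left h2 hc
        _ = (1 - 1/(k:ℝ))^(n+1) * OPT := by ring
  have hfinal := hiter k le_rfl
  -- (1 - 1/k)^k ≤ exp (-1)
  have hexp1 : 1 - 1/(k:ℝ) ≤ Real.exp (-(1/(k:ℝ))) := by
    have := Real.add_one_le_exp (-(1/(k:ℝ)))
    linarith
  have hpow : (1 - 1/(k:ℝ))^k ≤ (Real.exp (-(1/(k:ℝ))))^k :=
    pow_le_pow_left₀ hc hexp1 k
  have hexp2 : (Real.exp (-(1/(k:ℝ))))^k = Real.exp (-1) := by
    rw [← Real.exp_nat_mul]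
    congr 1
    field_simp
  rw [hexp2] at hpow
  have hmul : (1 - 1/(k:ℝ))^k * OPT ≤ Real.exp (-1) * OPT :=
    mul_le_mul_of_nonneg_right hpow hOPT0
  have hexp3 : Real.exp (-1) = 1 / Real.exp 1 := by
    rw [Real.exp_neg]; exact (one_div _).symm
  rw [hexp3] at hmul
  nlinarith [hfinal, hmul]
end
end

section
/- Let E ⊆ V × V be an edge set with probabilities p_e ∈ [0,1], and let u ∈ V be an isolated node, i.e., no edge of E is incident to u (neither starting nor ending at u). For any T ⊆ V ∖ {u}, let A_T = {⟨u, v⟩ : v ∈ T} be added edges each with probability 1. Then σ(A_T, {u}) = 1 + σ_E(T); consequently, choosing at most k added edges from {⟨u, v⟩ : v ∈ V ∖ {u}} to maximize σ(A, {u}) is equivalent to choosing a seed set T of at most k nodes to maximize σ_E(T). -/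
open scoped Classical

noncomputable section

/-!
Since `u` is isolated, the added edges `⟨u, v⟩` are disjoint from `E` and fire with probability
one, so a live-edge graph of `E ∪ A_T` with nonzero probability is `g ∪ A_T` for a live-edge graph
`g ⊆ E`, with the same probability. In `g ∪ A_T` the node `u` reaches itself and, through `T`,
exactly `Reach(T, g)`, which does not contain `u`; hence `I_{g ∪ A_T}({u}) = 1 + I_g(T)`, and
averaging gives `σ(A_T, {u}) = 1 + σ_E(T)`. The admissible edge sets `A` are exactly the `A_{T'}`
with `u ∉ T'` and `|A_{T'}| = |T'|`, so the two maximization problems correspond.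
-/

open Finset

namespace Finset

theorem forall_subset_image_iff {α β : Type*} [DecidableEq β] {s : Finset α} {f : α → β}
    {P : Finset β → Prop} : (∀ t ⊆ s.image f, P t) ↔ ∀ t ⊆ s, P (t.image f) := by
  simp only [subset_image_iff]
  exact ⟨fun h t ht => h _ ⟨t, ht, rfl⟩, fun h _ ⟨t, ht, hts⟩ => hts ▸ h t ht⟩

end Finset

section LiveEdge

variable {V : Type*} [DecidableEq V]

theorem sum_liveProb_powerset (F : Finset (V × V)) (p : V × V → ℝ) :
    ∑ g ∈ F.powerset, liveProb F p g = 1 := by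
  simp only [liveProb, ← prod_add, add_sub_cancel, prod_const_one]

theorem liveProb_eq_zero_of_not_subset {F A g : Finset (V × V)} {q : V × V → ℝ}
    (hAF : A ⊆ F) (hqA : ∀ e ∈ A, q e = 1) (hAg : ¬A ⊆ g) : liveProb F q g = 0 := by
  obtain ⟨e, heA, heg⟩ := not_subset.mp hAg
  exact mul_eq_zero_of_right _ <|
    prod_eq_zero (mem_sdiff.mpr ⟨hAF heA, heg⟩) (by rw [hqA e heA, sub_self])

theorem liveProb_union_of_prob_one {F A g : Finset (V × V)} {p q : V × V → ℝ}
    (hFA : Disjoint F A) (hqF : ∀ e ∈ F, q e = p e) (hqA : ∀ e ∈ A, q e = 1) (hg : g ⊆ F) :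
    liveProb (F ∪ A) q (g ∪ A) = liveProb F p g := by
  have hsdiff : (F ∪ A) \ (g ∪ A) = F \ g := by
    ext e
    have : e ∈ F → e ∉ A := fun he => disjoint_left.mp hFA he
    simp only [mem_sdiff, mem_union]
    tauto
  have hlive : ∏ e ∈ g, q e = ∏ e ∈ g, p e := prod_congr rfl fun e he => hqF e (hg he)
  have hdead : ∏ e ∈ F \ g, (1 - q e) = ∏ e ∈ F \ g, (1 - p e) :=
    prod_congr rfl fun e he => by rw [hqF e (mem_sdiff.mp he).1]
  rw [liveProb, liveProb, hsdiff, prod_union (hFA.mono_left hg), prod_eq_one hqA, mul_one,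
    hlive, hdead]

theorem sum_liveProb_union_of_prob_one {F A : Finset (V × V)} {p q : V × V → ℝ}
    (hFA : Disjoint F A) (hqF : ∀ e ∈ F, q e = p e) (hqA : ∀ e ∈ A, q e = 1)
    (f : Finset (V × V) → ℝ) :
    ∑ h ∈ (F ∪ A).powerset, liveProb (F ∪ A) q h * f h =
      ∑ g ∈ F.powerset, liveProb F p g * f (g ∪ A) := by
  have hinj : Set.InjOn (· ∪ A) F.powerset := fun g hg g' hg' (hgg' : g ∪ A = g' ∪ A) => by
    rw [← union_sdiff_cancel_right (hFA.mono_left (mem_powerset.mp hg)),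
      ← union_sdiff_cancel_right (hFA.mono_left (mem_powerset.mp hg')), hgg']
  have himage : F.powerset.image (· ∪ A) ⊆ (F ∪ A).powerset := fun h hh => by
    obtain ⟨g, hg, rfl⟩ := mem_image.mp hh
    exact mem_powerset.mpr (union_subset_union_left (mem_powerset.mp hg))
  have hvanish : ∀ h ∈ (F ∪ A).powerset, h ∉ F.powerset.image (· ∪ A) →
      liveProb (F ∪ A) q h * f h = 0 := fun h hh hnot => by
    refine mul_eq_zero_of_left (liveProb_eq_zero_of_not_subset subset_union_right hqA ?_) _
    refine fun hAh => hnot (mem_image.mpr ⟨h \ A, mem_powerset.mpr ?_, sdiff_union_of_subset hAh⟩)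
    exact fun e he => (mem_union.mp (mem_powerset.mp hh (mem_sdiff.mp he).1)).resolve_right
      (mem_sdiff.mp he).2
  rw [← sum_subset himage hvanish, sum_image hinj]
  exact sum_congr rfl fun g hg => by
    rw [liveProb_union_of_prob_one hFA hqF hqA (mem_powerset.mp hg)]

end LiveEdge

section Reach

variable {V : Type*}

theorem Reach_subset_union_image_snd (S : Finset V) (g : Finset (V × V)) :
    Reach S g ⊆ (S : Set V) ∪ Prod.snd '' (g : Set (V × V)) := by
  rintro x ⟨s, hs, hsx⟩
  rcases hsx.cases_tail with rfl | ⟨c, -, hcx⟩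
  · exact Or.inl hs
  · exact Or.inr ⟨_, hcx, rfl⟩

theorem Reach_finite (S : Finset V) (g : Finset (V × V)) : (Reach S g).Finite :=
  (S.finite_toSet.union (g.finite_toSet.image _)).subset (Reach_subset_union_image_snd S g)

theorem notMem_Reach {S : Finset V} {g : Finset (V × V)} {u : V} (hS : u ∉ S)
    (hg : ∀ e ∈ g, e.2 ≠ u) : u ∉ Reach S g := fun hu =>
  (Reach_subset_union_image_snd S g hu).elim hS fun ⟨e, he, heu⟩ => hg e he heu

theorem Reach_singleton_union_image [DecidableEq V] {g : Finset (V × V)} {u : V}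
    (T : Finset V) (hg : ∀ e ∈ g, e.1 ≠ u) :
    Reach {u} (g ∪ T.image (u, ·)) = insert u (Reach T g) := by
  apply Set.Subset.antisymm
  · rintro x ⟨s, hs, hsx⟩
    rw [mem_singleton] at hs
    subst hs
    induction hsx with
    | refl => exact Set.mem_insert _ _
    | tail _ hbc ih =>
      rcases mem_union.mp hbc with hlive | hstar
      · rcases ih with rfl | ⟨t, ht, htb⟩
        · exact absurd rfl (hg _ hlive)
        · exact Or.inr ⟨t, ht, htb.tail hlive⟩
      · obtain ⟨t, ht, hut⟩ := mem_image.mp hstar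
        cases hut
        exact Or.inr ⟨_, ht, .refl⟩
  · rintro x (rfl | ⟨t, ht, htx⟩)
    · exact ⟨x, mem_singleton_self x, .refl⟩
    · exact ⟨u, mem_singleton_self u, .head (mem_union_right _ (mem_image_of_mem _ ht))
        (Relation.ReflTransGen.mono (fun _ _ h => mem_union_left _ h) _ _ htx)⟩

theorem ncard_Reach_singleton_union_image [DecidableEq V] {g : Finset (V × V)} {u : V}
    {T : Finset V} (hT : u ∉ T) (hg : ∀ e ∈ g, e.1 ≠ u ∧ e.2 ≠ u) :
    (Reach {u} (g ∪ T.image (u, ·))).ncard = 1 + (Reach T g).ncard := by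
  rw [Reach_singleton_union_image T fun e he => (hg e he).1,
    Set.ncard_insert_of_notMem (notMem_Reach hT fun e he => (hg e he).2) (Reach_finite T g),
    add_comm]

end Reach

theorem expSpread_union_image_of_isolated {V : Type*} [DecidableEq V] (E : Finset (V × V))
    (p : V × V → ℝ) {u : V} (hu : ∀ e ∈ E, e.1 ≠ u ∧ e.2 ≠ u) {T : Finset V} (hT : u ∉ T) :
    expSpread (E ∪ T.image (u, ·)) (fun e => if e.1 = u then 1 else p e) {u} =
      1 + expSpread E p T := by
  have hdisj : Disjoint E (T.image (u, ·)) := disjoint_left.mpr fun e he he' => by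
    obtain ⟨v, -, rfl⟩ := mem_image.mp he'
    exact (hu _ he).1 rfl
  have hqA : ∀ e ∈ T.image (u, ·), (if e.1 = u then 1 else p e) = 1 := fun e he => by
    obtain ⟨v, -, rfl⟩ := mem_image.mp he
    exact if_pos rfl
  rw [expSpread, sum_liveProb_union_of_prob_one hdisj (fun e he => if_neg (hu e he).1) hqA]
  calc ∑ g ∈ E.powerset, liveProb E p g * ((Reach {u} (g ∪ T.image (u, ·))).ncard : ℝ)
      = ∑ g ∈ E.powerset, (liveProb E p g + liveProb E p g * (Reach T g).ncard) :=
        sum_congr rfl fun g hg => by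
          rw [ncard_Reach_singleton_union_image hT fun e he => hu e (mem_powerset.mp hg he),
            Nat.cast_add, Nat.cast_one, mul_one_add]
    _ = 1 + expSpread E p T := by rw [sum_add_distrib, sum_liveProb_powerset, expSpread]

theorem isolated_seed_reduction_general {V : Type*} [Fintype V] [DecidableEq V]
    (E : Finset (V × V)) (p : V × V → ℝ)
    (u : V) (hu : ∀ e ∈ E, e.1 ≠ u ∧ e.2 ≠ u)
    (T : Finset V) (hT : u ∉ T) :
    expSpread (E ∪ T.image (fun v => (u, v)))
        (fun e => if e.1 = u then 1 else p e) {u}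
      = 1 + expSpread E p T
    ∧ ∀ k : ℕ, T.card ≤ k →
      ((∀ T' : Finset V, u ∉ T' → T'.card ≤ k → expSpread E p T' ≤ expSpread E p T) ↔
        (∀ A : Finset (V × V),
          A ⊆ (Finset.univ.erase u).image (fun v => (u, v)) → A.card ≤ k →
          expSpread (E ∪ A) (fun e => if e.1 = u then 1 else p e) {u} ≤
            expSpread (E ∪ T.image (fun v => (u, v)))
              (fun e => if e.1 = u then 1 else p e) {u})) := by
  have hσ := fun T' (hT' : u ∉ T') => expSpread_union_image_of_isolated E p hu hT'
  refine ⟨hσ T hT, fun k _ => ?_⟩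
  rw [forall_subset_image_iff]
  refine forall_congr' fun T' => ?_
  rw [subset_erase, and_iff_right (subset_univ T')]
  refine imp_congr_right fun hT' => ?_
  rw [card_image_of_injective _ (Prod.mk_right_injective u), hσ T' hT', hσ T hT,
    add_le_add_iff_left]

/-- Let `u` be an isolated node of `(V, E)`. For `T ⊆ V ∖ {u}`, adding the edges
`A_T = {⟨u,v⟩ : v ∈ T}`, each with probability `1`, gives `σ(A_T, {u}) = 1 + σ_E(T)`;
consequently, choosing at most `k` added edges from `{⟨u,v⟩ : v ∈ V ∖ {u}}` to maximize
`σ(A, {u})` is equivalent to choosing a seed set `T` of at most `k` nodes to maximize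
`σ_E(T)`. -/
theorem isolated_seed_reduction {V : Type*} [Fintype V] [DecidableEq V]
    (E : Finset (V × V)) (p : V × V → ℝ)
    (hp : ∀ e, 0 ≤ p e ∧ p e ≤ 1)
    (u : V) (hu : ∀ e ∈ E, e.1 ≠ u ∧ e.2 ≠ u)
    (T : Finset V) (hT : u ∉ T) :
    expSpread (E ∪ T.image (fun v => (u, v)))
        (fun e => if e.1 = u then 1 else p e) {u}
      = 1 + expSpread E p T
    ∧ ∀ k : ℕ, T.card ≤ k →
      ((∀ T' : Finset V, u ∉ T' → T'.card ≤ k → expSpread E p T' ≤ expSpread E p T) ↔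
        (∀ A : Finset (V × V),
          A ⊆ (Finset.univ.erase u).image (fun v => (u, v)) → A.card ≤ k →
          expSpread (E ∪ A) (fun e => if e.1 = u then 1 else p e) {u} ≤
            expSpread (E ∪ T.image (fun v => (u, v)))
              (fun e => if e.1 = u then 1 else p e) {u})) :=
  isolated_seed_reduction_general E p u hu T hT
end
end
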